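/- For the W(2,2) Lie conformal algebra 𝒲 and the module ℂ_a with a ≠ 0 (the one-dimensional space ℂ with ∂v = av and 𝒲 acting as zero), the reduced cohomology H^q(𝒲, ℂ_a) vanishes for all q ≥ 0. -/

import Mathlib

open MvPolynomial

/-! ### The basic complex of the W(2,2) Lie conformal algebra `𝒲` with
trivial coefficients `ℂ`.

`𝒲` is the free `ℂ[∂]`-module on `{L, M}` with `[L_λ L] = (∂+2λ)L`,
`[L_λ M] = (∂+2λ)M`, `[M_λ M] = 0`.  Since `𝒲` is free over `ℂ[∂]` on the
basis `{L, M}` (encoded as `Fin 2`, `0 = L`, `1 = M`), a `q`-cochain is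
determined, via conformal antilinearity, by its values on basis tuples; we
encode it as a function of a basis tuple `X : Fin q → Fin 2` and values of the
variables `λ : Fin q → ℂ`, polynomial in `λ` and skew-symmetric under
simultaneous permutations. -/

abbrev WCochain (q : ℕ) : Type := (Fin q → Fin 2) → (Fin q → ℂ) → ℂ

/-- the value is polynomial in the `λ`'s. -/
def IsPolyCochain {q : ℕ} (γ : WCochain q) : Prop :=
  ∀ X, ∃ P : MvPolynomial (Fin q) ℂ, ∀ l, γ X l = eval l P

/-- skew-symmetry with respect to simultaneous permutations of the arguments
and the variables. -/
def IsSkewCochain {q : ℕ} (γ : WCochain q) : Prop :=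
  ∀ σ : Equiv.Perm (Fin q), ∀ X l,
    γ (X ∘ σ) (l ∘ σ) = (Equiv.Perm.sign σ : ℤ) * γ X l

def IsCochain {q : ℕ} (γ : WCochain q) : Prop := IsPolyCochain γ ∧ IsSkewCochain γ

/-- scalar coefficient of `[x_λ y]` for basis elements: `0` iff `x = y = M`. -/
def bcoef (x y : Fin 2) : ℂ := if x = 1 ∧ y = 1 then 0 else 1

/-- the basis element appearing in `[x_λ y]`: `[L L] ∝ L`, `[L M] ∝ M`,
`[M L] ∝ M`. -/
def bres (x y : Fin 2) : Fin 2 := max x y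

/-- the tuple `X` with entries `i` and `j` removed (`i < j`); entry `k` of the
result is given, with junk value `d` out of range. -/
def removeTwo {α : Type*} {n : ℕ} (i j : Fin n) (X : Fin n → α) (d : α) : ℕ → α :=
  fun k => (((List.ofFn X).eraseIdx j.val).eraseIdx i.val).getD k d

/-- the differential of the basic complex with trivial coefficients:
`(dγ)_{λ₁,…,λ_{q+1}}(a₁,…,a_{q+1}) = ∑_{i<j} (−1)^{i+j}
γ_{λᵢ+λⱼ,λ₁,…,λ̂ᵢ,…,λ̂ⱼ,…}([a_{i λᵢ} a_j],a₁,…,âᵢ,…,âⱼ,…)`; for basis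
arguments, `[a_{i λᵢ} a_j]` contributes the factor `(λᵢ−λⱼ)·bcoef` on the
basis element `bres` placed in the first slot (by conformal antilinearity,
since the coefficients are trivial). -/
noncomputable def dW {q : ℕ} (γ : WCochain q) : WCochain (q + 1) :=
  fun X l =>
    ∑ p ∈ Finset.univ.filter (fun p : Fin (q+1) × Fin (q+1) => p.1 < p.2),
      (-1 : ℂ) ^ (p.1.val + p.2.val) * bcoef (X p.1) (X p.2) * (l p.1 - l p.2) *
        γ (fun k => if k.val = 0 then bres (X p.1) (X p.2)
              else removeTwo p.1 p.2 X 0 (k.val - 1))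
          (fun k => if k.val = 0 then l p.1 + l p.2
              else removeTwo p.1 p.2 l 0 (k.val - 1))

/-- `dW` as a linear map. -/
noncomputable def dWLin (q : ℕ) : WCochain q →ₗ[ℂ] WCochain (q + 1) where
  toFun := dW
  map_add' γ₁ γ₂ := by
    funext X l
    simp only [dW, Pi.add_apply, mul_add, Finset.sum_add_distrib]
  map_smul' c γ := by
    funext X l
    simp only [dW, Pi.smul_apply, smul_eq_mul, RingHom.id_apply, Finset.mul_sum]
    exact Finset.sum_congr rfl fun p _ => by ring

/-- the `ℂ`-subspace of genuine cochains. -/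
noncomputable def cochainSub (q : ℕ) : Submodule ℂ (WCochain q) where
  carrier := {γ | IsCochain γ}
  add_mem' := by
    rintro a b ⟨hap, has⟩ ⟨hbp, hbs⟩
    refine ⟨fun X => ?_, fun σ X l => ?_⟩
    · obtain ⟨P, hP⟩ := hap X; obtain ⟨Q, hQ⟩ := hbp X
      exact ⟨P + Q, fun l => by simp [hP, hQ]⟩
    · have := has σ X l; have := hbs σ X l
      simp only [Pi.add_apply, *]; ring
  zero_mem' := ⟨fun X => ⟨0, by simp⟩, fun σ X l => by simp⟩
  smul_mem' := by
    rintro c γ ⟨hp, hs⟩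
    refine ⟨fun X => ?_, fun σ X l => ?_⟩
    · obtain ⟨P, hP⟩ := hp X
      exact ⟨c • P, fun l => by simp [hP]⟩
    · have := hs σ X l
      simp only [Pi.smul_apply, smul_eq_mul, *]; ring

/-- basic `q`-cocycles. -/
noncomputable def cocycleSub (q : ℕ) : Submodule ℂ (WCochain q) :=
  cochainSub q ⊓ LinearMap.ker (dWLin q)

/-- basic `q`-coboundaries. -/
noncomputable def coboundSub : (q : ℕ) → Submodule ℂ (WCochain q)
  | 0 => ⊥
  | (q + 1) => Submodule.map (dWLin q) (cochainSub q)

/-- the `q`-th basic cohomology `H̃^q(𝒲,ℂ)`. -/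
noncomputable abbrev basicH (q : ℕ) :=
  cocycleSub q ⧸ Submodule.comap (cocycleSub q).subtype (coboundSub q)

/-- the action of `∂` on the basic complex with trivial coefficients:
`(∂γ)_{λ₁,…,λ_q} = (∑ᵢ λᵢ)·γ_{λ₁,…,λ_q}`. -/
noncomputable def paW (q : ℕ) : WCochain q →ₗ[ℂ] WCochain q where
  toFun γ := fun X l => (∑ i, l i) * γ X l
  map_add' γ₁ γ₂ := by funext X l; simp [mul_add]
  map_smul' c γ := by funext X l; simp; ring

/-- reduced `q`-cocycles: cochains `γ` with `dγ ∈ ∂C̃^{q+1}`. -/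
noncomputable def redZ (q : ℕ) : Submodule ℂ (WCochain q) :=
  cochainSub q ⊓
    Submodule.comap (dWLin q) (Submodule.map (paW (q+1)) (cochainSub (q+1)))

/-- reduced `q`-coboundaries: `dC̃^{q−1} + ∂C̃^q`. -/
noncomputable def redB : (q : ℕ) → Submodule ℂ (WCochain q)
  | 0 => Submodule.map (paW 0) (cochainSub 0)
  | (q + 1) => Submodule.map (dWLin q) (cochainSub q)
      ⊔ Submodule.map (paW (q+1)) (cochainSub (q+1))

/-- the `q`-th reduced cohomology `H^q(𝒲,ℂ)`. -/
noncomputable abbrev reducedH (q : ℕ) :=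
  redZ q ⧸ Submodule.comap (redZ q).subtype (redB q)

/-- the action of `∂` on the basic complex with coefficients in `ℂ_a`
(where `∂v = av` and `𝒲` acts as zero, so the differential is the same as for
trivial coefficients): `(∂γ)_{λ₁,…,λ_q} = (a + ∑ᵢ λᵢ)·γ`. -/
noncomputable def paA (a : ℂ) (q : ℕ) : WCochain q →ₗ[ℂ] WCochain q where
  toFun γ := fun X l => (a + ∑ i, l i) * γ X l
  map_add' γ₁ γ₂ := by funext X l; simp [mul_add]
  map_smul' c γ := by funext X l; simp; ring

/-- reduced `q`-cocycles with coefficients in `ℂ_a`. -/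
noncomputable def redZA (a : ℂ) (q : ℕ) : Submodule ℂ (WCochain q) :=
  cochainSub q ⊓
    Submodule.comap (dWLin q) (Submodule.map (paA a (q+1)) (cochainSub (q+1)))

/-- reduced `q`-coboundaries with coefficients in `ℂ_a`. -/
noncomputable def redBA (a : ℂ) : (q : ℕ) → Submodule ℂ (WCochain q)
  | 0 => Submodule.map (paA a 0) (cochainSub 0)
  | (q + 1) => Submodule.map (dWLin q) (cochainSub q)
      ⊔ Submodule.map (paA a (q+1)) (cochainSub (q+1))

/-- the `q`-th reduced cohomology `H^q(𝒲,ℂ_a)`. -/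
noncomputable abbrev reducedHA (a : ℂ) (q : ℕ) :=
  redZA a q ⧸ Submodule.comap (redZA a q).subtype (redBA a q)

/-! ### Auxiliary machinery for the proof -/

section Aux

lemma removeTwo_eq {α : Type*} {n : ℕ} (i j : Fin n) (hij : i.val < j.val)
    (X : Fin n → α) (d : α) (k : ℕ) :
    removeTwo i j X d k =
      if h : k < i.val then X ⟨k, by omega⟩
      else if h2 : k + 1 < j.val then X ⟨k + 1, by omega⟩
      else if h3 : k + 2 < n then X ⟨k + 2, h3⟩ else d := by
  have hj := j.isLt
  simp only [removeTwo, List.getD_eq_getElem?_getD, List.getElem?_eraseIdx,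
    List.getElem?_ofFn, List.ofFnNthVal]
  split_ifs <;> simp_all <;> omega

def extPerm {n : ℕ} (σ : Equiv.Perm (Fin n)) : Equiv.Perm (Fin (n+1)) :=
  finSuccEquivLast.symm.permCongr σ.optionCongr

@[simp] lemma extPerm_castSucc {n : ℕ} (σ : Equiv.Perm (Fin n)) (i : Fin n) :
    extPerm σ (Fin.castSucc i) = Fin.castSucc (σ i) := by
  simp [extPerm, Equiv.permCongr_apply]

@[simp] lemma extPerm_last {n : ℕ} (σ : Equiv.Perm (Fin n)) :
    extPerm σ (Fin.last n) = Fin.last n := by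
  simp [extPerm, Equiv.permCongr_apply]

lemma sign_extPerm {n : ℕ} (σ : Equiv.Perm (Fin n)) :
    Equiv.Perm.sign (extPerm σ) = Equiv.Perm.sign σ := by
  rw [extPerm, Equiv.Perm.sign_permCongr, Equiv.optionCongr_sign]

lemma snoc_comp_extPerm {α : Type*} {n : ℕ} (σ : Equiv.Perm (Fin n)) (X : Fin n → α) (d : α) :
    Fin.snoc X d ∘ (extPerm σ) = Fin.snoc (X ∘ σ) d := by
  funext k
  induction k using Fin.lastCases with
  | last => simp
  | cast i => simp

/-- the homotopy operator `τ₂` (up to sign conventions): insert `L` with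
`λ = 0` in the last slot. -/
noncomputable def tauW {q : ℕ} (γ : WCochain (q+1)) : WCochain q :=
  fun X l => (-1 : ℂ)^q * γ (Fin.snoc X 0) (Fin.snoc l 0)

lemma bcoef_zero (x : Fin 2) : bcoef x 0 = 1 := by
  simp [bcoef]

lemma bres_zero (x : Fin 2) : bres x 0 = x := by
  revert x; decide

lemma tauW_isCochain {q : ℕ} {γ : WCochain (q+1)} (h : IsCochain γ) : IsCochain (tauW γ) := by
  obtain ⟨hp, hs⟩ := h
  constructor
  · intro Y
    obtain ⟨P, hP⟩ := hp (Fin.snoc Y 0)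
    set g : Fin (q+1) → MvPolynomial (Fin q) ℂ :=
      Fin.snoc (fun j : Fin q => (MvPolynomial.X j : MvPolynomial (Fin q) ℂ)) 0 with hg
    refine ⟨(C ((-1:ℂ)^q)) * bind₁ g P, fun l => ?_⟩
    rw [tauW, hP (Fin.snoc l 0), eval_mul, eval_C]
    have h1 : eval l (bind₁ g P) = eval (fun i => eval l (g i)) P :=
      eval₂Hom_bind₁ (RingHom.id ℂ) l g P
    have h2 : (fun i => eval l (g i)) = Fin.snoc l 0 := by
      funext i
      induction i using Fin.lastCases with
      | last => simp [hg]
      | cast i => simp [hg]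
    rw [h1, h2]
  · intro σ Y l
    have h1 : Fin.snoc (Y ∘ σ) (0 : Fin 2) = Fin.snoc Y 0 ∘ (extPerm σ) :=
      (snoc_comp_extPerm σ Y 0).symm
    have h2 : Fin.snoc (l ∘ σ) (0 : ℂ) = Fin.snoc l 0 ∘ (extPerm σ) :=
      (snoc_comp_extPerm σ l 0).symm
    rw [tauW, tauW, h1, h2, hs (extPerm σ), sign_extPerm]
    ring

lemma tauW_paA {q : ℕ} (a : ℂ) (η : WCochain (q+1)) :
    tauW ((paA a (q+1)) η) = (paA a q) (tauW η) := by
  funext Y l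
  simp only [tauW, paA, LinearMap.coe_mk, AddHom.coe_mk]
  rw [Fin.sum_univ_castSucc]
  simp only [Fin.snoc_castSucc, Fin.snoc_last, add_zero]
  ring

end Aux

section Aux2

lemma snoc_mk {α : Type*} {n : ℕ} (X : Fin n → α) (z : α) (k : ℕ) (h : k < n) (h2 : k < n+1) :
    Fin.snoc (α := fun _ => α) X z ⟨k, h2⟩ = X ⟨k, h⟩ := by
  have e : (⟨k, h2⟩ : Fin (n+1)) = Fin.castSucc ⟨k, h⟩ := rfl
  rw [e, Fin.snoc_castSucc]

lemma snoc_mk_last {α : Type*} {n : ℕ} (X : Fin n → α) (z : α) (h : n < n+1) :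
    Fin.snoc (α := fun _ => α) X z ⟨n, h⟩ = z := by
  have e : (⟨n, h⟩ : Fin (n+1)) = Fin.last n := rfl
  rw [e, Fin.snoc_last]

lemma args_last {α : Type*} {n : ℕ} (X : Fin (n+1) → α) (z : α) (i : Fin (n+1)) :
    (fun k : Fin (n+1) => if (k : ℕ) = 0 then X i
      else removeTwo (Fin.castSucc i) (Fin.last (n+1)) (Fin.snoc X z) z ((k:ℕ) - 1))
    = X ∘ ⇑(Fin.cycleRange i)⁻¹ := by
  funext k
  obtain ⟨t, rfl⟩ : ∃ t, Fin.cycleRange i t = k :=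
    ⟨(Fin.cycleRange i)⁻¹ k, Equiv.apply_symm_apply _ _⟩
  have hinv : (Fin.cycleRange i)⁻¹ (Fin.cycleRange i t) = t := Equiv.symm_apply_apply _ _
  simp only [Function.comp_apply, hinv]
  have hrm : ((Fin.castSucc i) : ℕ) < ((Fin.last (n+1)) : ℕ) := by
    simp; have := i.isLt; omega
  rcases lt_trichotomy t i with h | h | h
  · have hv : ((Fin.cycleRange i t) : ℕ) = (t : ℕ) + 1 := Fin.coe_cycleRange_of_lt h
    rw [hv, if_neg (by omega), removeTwo_eq _ _ hrm]
    have hti : (t : ℕ) < (i : ℕ) := h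
    rw [dif_pos (by simpa using hti), snoc_mk _ _ _ (by omega)]
    exact congrArg X (Fin.ext (by simp))
  · have hv : Fin.cycleRange i t = 0 := Fin.cycleRange_of_eq (by rw [h])
    rw [hv, h]
    simp
  · have hv : Fin.cycleRange i t = t := Fin.cycleRange_of_gt h
    have ht1 : 1 ≤ (t : ℕ) := by
      have : (i : ℕ) < (t : ℕ) := h
      omega
    rw [hv, if_neg (by omega), removeTwo_eq _ _ hrm]
    have hit : (i : ℕ) < (t : ℕ) := h
    rw [dif_neg (by simp; omega), dif_pos (by simp; omega), snoc_mk _ _ _ (by omega)]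
    exact congrArg X (Fin.ext (by simp; omega))

lemma args_mid {α : Type*} {n : ℕ} (X : Fin (n+1) → α) (z w : α) (i j : Fin (n+1))
    (hij : (i : ℕ) < (j : ℕ)) :
    (fun k : Fin (n+1) => if (k : ℕ) = 0 then w
      else removeTwo (Fin.castSucc i) (Fin.castSucc j) (Fin.snoc X z) z ((k:ℕ) - 1))
    = Fin.snoc (fun k : Fin n => if (k : ℕ) = 0 then w
        else removeTwo i j X z ((k:ℕ) - 1)) z := by
  have hn : 1 ≤ n := by have := j.isLt; omega
  funext k
  have hcs : ((Fin.castSucc i) : ℕ) < ((Fin.castSucc j) : ℕ) := by simpa using hij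
  rcases Nat.lt_or_ge (k : ℕ) n with hk | hk
  · -- k = castSucc ⟨k, hk⟩
    have e : k = Fin.castSucc ⟨(k : ℕ), hk⟩ := Fin.ext (by simp)
    rw [e, Fin.snoc_castSucc]
    simp only [Fin.coe_castSucc]
    rcases Nat.eq_zero_or_pos (k : ℕ) with h0 | h0
    · rw [if_pos h0, if_pos h0]
    · rw [if_neg (by omega), if_neg (by omega),
        removeTwo_eq _ _ hcs, removeTwo_eq _ _ hij]
      simp only [Fin.coe_castSucc]
      split_ifs with h1 h2 h3 <;>
        first
          | (exfalso; omega)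
          | (rw [snoc_mk _ _ _ (by omega)])
  · -- k = last
    have hkn : (k : ℕ) = n := by have := k.isLt; omega
    have e : k = Fin.last n := Fin.ext (by simpa using hkn)
    rw [e, Fin.snoc_last, if_neg (by simp; omega), removeTwo_eq _ _ hcs]
    simp only [Fin.coe_castSucc, Fin.val_last]
    rw [dif_neg (by omega), dif_neg (by have := j.isLt; omega), dif_pos (by omega)]
    have e2 : (⟨n - 1 + 2, by omega⟩ : Fin (n+2)) = Fin.last (n+1) := Fin.ext (by simp; omega)
    rw [e2, Fin.snoc_last]

end Aux2

section Homotopy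

lemma neg_one_sq_pow (m : ℕ) : ((-1 : ℂ)^m) * ((-1 : ℂ)^m) = 1 := by
  rw [← pow_add, ← two_mul, pow_mul, neg_one_sq, one_pow]

set_option maxHeartbeats 1000000 in
lemma homotopy {q : ℕ} (γ : WCochain (q+1)) (hs : IsSkewCochain γ)
    (X : Fin (q+1) → Fin 2) (l : Fin (q+1) → ℂ) :
    tauW (dW γ) X l + dW (tauW γ) X l = (∑ i, l i) * γ X l := by
  have step1 : tauW (dW γ) X l = (-1:ℂ)^(q+1) *
      ∑ p ∈ Finset.univ.filter (fun p : Fin (q+2) × Fin (q+2) => p.1 < p.2),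
        (-1 : ℂ) ^ (p.1.val + p.2.val) * bcoef ((Fin.snoc X 0 : Fin (q+2) → Fin 2) p.1) ((Fin.snoc X 0 : Fin (q+2) → Fin 2) p.2) *
          ((Fin.snoc l 0 : Fin (q+2) → ℂ) p.1 - (Fin.snoc l 0 : Fin (q+2) → ℂ) p.2) *
          γ (fun k => if k.val = 0 then bres ((Fin.snoc X 0 : Fin (q+2) → Fin 2) p.1) ((Fin.snoc X 0 : Fin (q+2) → Fin 2) p.2)
                else removeTwo p.1 p.2 (Fin.snoc X 0) 0 (k.val - 1))
            (fun k => if k.val = 0 then (Fin.snoc l 0 : Fin (q+2) → ℂ) p.1 + (Fin.snoc l 0 : Fin (q+2) → ℂ) p.2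
                else removeTwo p.1 p.2 (Fin.snoc l 0) 0 (k.val - 1)) := by
    simp only [tauW, dW]
  have hD : dW (tauW γ) X l =
      ∑ p ∈ Finset.univ.filter (fun p : Fin (q+1) × Fin (q+1) => p.1 < p.2),
        (-1 : ℂ) ^ (p.1.val + p.2.val) * bcoef (X p.1) (X p.2) * (l p.1 - l p.2) *
          ((-1:ℂ)^q * γ
            (Fin.snoc (fun k : Fin q => if k.val = 0 then bres (X p.1) (X p.2)
                else removeTwo p.1 p.2 X 0 (k.val - 1)) 0)
            (Fin.snoc (fun k : Fin q => if k.val = 0 then l p.1 + l p.2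
                else removeTwo p.1 p.2 l 0 (k.val - 1)) 0)) := by
    simp only [tauW, dW]
  rw [step1,
    ← Finset.sum_filter_add_sum_filter_not
      (Finset.univ.filter (fun p : Fin (q+2) × Fin (q+2) => p.1 < p.2))
      (fun p => p.2 = Fin.last (q+1))]
  -- Part A : the pairs (i, last)
  have hA : ((Finset.univ.filter (fun p : Fin (q+2) × Fin (q+2) => p.1 < p.2)).filter
        (fun p => p.2 = Fin.last (q+1)))
      = Finset.univ.image (fun i : Fin (q+1) => (Fin.castSucc i, Fin.last (q+1))) := by
    ext p
    simp only [Finset.mem_filter, Finset.mem_univ, true_and, Finset.mem_image]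
    constructor
    · rintro ⟨h1, h2⟩
      have hlt : (p.1 : ℕ) < q+1 := by
        rw [h2] at h1
        simpa [Fin.lt_iff_val_lt_val] using h1
      exact ⟨⟨(p.1 : ℕ), hlt⟩, Prod.ext (Fin.ext rfl) h2.symm⟩
    · rintro ⟨i, rfl⟩
      exact ⟨Fin.castSucc_lt_last i, rfl⟩
  have hAinj : ∀ x ∈ (Finset.univ : Finset (Fin (q+1))), ∀ y ∈ Finset.univ,
      (fun i : Fin (q+1) => (Fin.castSucc i, Fin.last (q+1))) x =
      (fun i : Fin (q+1) => (Fin.castSucc i, Fin.last (q+1))) y → x = y := by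
    intro x _ y _ h
    exact Fin.castSucc_injective _ (congrArg Prod.fst h)
  -- the sign of the cycle
  have hsgn : ∀ i : Fin (q+1),
      ((Equiv.Perm.sign ((Fin.cycleRange i)⁻¹) : ℤ) : ℂ) = (-1:ℂ)^(i : ℕ) := by
    intro i
    rw [Equiv.Perm.sign_inv, Fin.sign_cycleRange]
    push_cast
    ring
  have hpow : ∀ m : ℕ, (-1:ℂ)^(m+(q+1)) * (-1:ℂ)^m = (-1:ℂ)^(q+1) := by
    intro m
    rw [← pow_add, show m+(q+1)+m = 2*m+(q+1) from by ring, pow_add, pow_mul,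
      neg_one_sq, one_pow, one_mul]
  have hPartA : ∑ p ∈ ((Finset.univ.filter
          (fun p : Fin (q+2) × Fin (q+2) => p.1 < p.2)).filter
          (fun p => p.2 = Fin.last (q+1))),
        (-1 : ℂ) ^ (p.1.val + p.2.val) * bcoef ((Fin.snoc X 0 : Fin (q+2) → Fin 2) p.1) ((Fin.snoc X 0 : Fin (q+2) → Fin 2) p.2) *
          ((Fin.snoc l 0 : Fin (q+2) → ℂ) p.1 - (Fin.snoc l 0 : Fin (q+2) → ℂ) p.2) *
          γ (fun k => if k.val = 0 then bres ((Fin.snoc X 0 : Fin (q+2) → Fin 2) p.1) ((Fin.snoc X 0 : Fin (q+2) → Fin 2) p.2)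
                else removeTwo p.1 p.2 (Fin.snoc X 0) 0 (k.val - 1))
            (fun k => if k.val = 0 then (Fin.snoc l 0 : Fin (q+2) → ℂ) p.1 + (Fin.snoc l 0 : Fin (q+2) → ℂ) p.2
                else removeTwo p.1 p.2 (Fin.snoc l 0) 0 (k.val - 1))
      = (-1:ℂ)^(q+1) * ((∑ i, l i) * γ X l) := by
    rw [hA, Finset.sum_image hAinj]
    have hterm : ∀ i : Fin (q+1),
        (-1 : ℂ) ^ ((Fin.castSucc i).val + (Fin.last (q+1)).val) *
          bcoef ((Fin.snoc X 0 : Fin (q+2) → Fin 2) (Fin.castSucc i)) ((Fin.snoc X 0 : Fin (q+2) → Fin 2) (Fin.last (q+1))) *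
          ((Fin.snoc l 0 : Fin (q+2) → ℂ) (Fin.castSucc i) - (Fin.snoc l 0 : Fin (q+2) → ℂ) (Fin.last (q+1))) *
          γ (fun k => if k.val = 0
                then bres ((Fin.snoc X 0 : Fin (q+2) → Fin 2) (Fin.castSucc i)) ((Fin.snoc X 0 : Fin (q+2) → Fin 2) (Fin.last (q+1)))
                else removeTwo (Fin.castSucc i) (Fin.last (q+1)) (Fin.snoc X 0) 0 (k.val - 1))
            (fun k => if k.val = 0
                then (Fin.snoc l 0 : Fin (q+2) → ℂ) (Fin.castSucc i) + (Fin.snoc l 0 : Fin (q+2) → ℂ) (Fin.last (q+1))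
                else removeTwo (Fin.castSucc i) (Fin.last (q+1)) (Fin.snoc l 0) 0 (k.val - 1))
        = (-1:ℂ)^(q+1) * (l i * γ X l) := by
      intro i
      have eX : (fun k : Fin (q+1) => if k.val = 0
            then bres ((Fin.snoc X 0 : Fin (q+2) → Fin 2) (Fin.castSucc i)) ((Fin.snoc X 0 : Fin (q+2) → Fin 2) (Fin.last (q+1)))
            else removeTwo (Fin.castSucc i) (Fin.last (q+1)) (Fin.snoc X 0) 0 (k.val - 1))
          = X ∘ ⇑(Fin.cycleRange i)⁻¹ := by
        rw [← args_last X (0 : Fin 2) i]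
        funext k
        by_cases hk : (k : ℕ) = 0 <;> simp [hk, bres_zero]
      have el : (fun k : Fin (q+1) => if k.val = 0
            then (Fin.snoc l 0 : Fin (q+2) → ℂ) (Fin.castSucc i) + (Fin.snoc l 0 : Fin (q+2) → ℂ) (Fin.last (q+1))
            else removeTwo (Fin.castSucc i) (Fin.last (q+1)) (Fin.snoc l 0) 0 (k.val - 1))
          = l ∘ ⇑(Fin.cycleRange i)⁻¹ := by
        rw [← args_last l (0 : ℂ) i]
        funext k
        by_cases hk : (k : ℕ) = 0 <;> simp [hk]
      rw [eX, el, hs ((Fin.cycleRange i)⁻¹) X l, hsgn i]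
      simp only [Fin.snoc_castSucc, Fin.snoc_last, Fin.coe_castSucc, Fin.val_last,
        bcoef_zero, sub_zero, mul_one]
      linear_combination (l i * γ X l) * hpow (i : ℕ)
    rw [Finset.sum_congr rfl (fun i _ => hterm i), ← Finset.mul_sum, ← Finset.sum_mul]
  -- Part B : the pairs (i, j) with j < last
  have hB : ((Finset.univ.filter (fun p : Fin (q+2) × Fin (q+2) => p.1 < p.2)).filter
        (fun p => ¬ p.2 = Fin.last (q+1)))
      = (Finset.univ.filter (fun p : Fin (q+1) × Fin (q+1) => p.1 < p.2)).image
          (fun p => (Fin.castSucc p.1, Fin.castSucc p.2)) := by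
    ext p
    simp only [Finset.mem_filter, Finset.mem_univ, true_and, Finset.mem_image]
    constructor
    · rintro ⟨h1, h2⟩
      have h2' : (p.2 : ℕ) < q+1 := by
        rcases Nat.lt_or_ge (p.2 : ℕ) (q+1) with h | h
        · exact h
        · exact absurd (Fin.ext (by simp only [Fin.val_last]; have := p.2.isLt; omega)) h2
      have h1' : (p.1 : ℕ) < (p.2 : ℕ) := h1
      refine ⟨(⟨(p.1 : ℕ), Nat.lt_trans h1' h2'⟩, ⟨(p.2 : ℕ), h2'⟩), ?_, ?_⟩
      · exact h1'
      · exact Prod.ext (Fin.ext rfl) (Fin.ext rfl)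
    · rintro ⟨p', hp', rfl⟩
      refine ⟨?_, ?_⟩
      · exact hp'
      · exact (Fin.castSucc_lt_last p'.2).ne
  have hBinj : ∀ x ∈ (Finset.univ.filter (fun p : Fin (q+1) × Fin (q+1) => p.1 < p.2)),
      ∀ y ∈ (Finset.univ.filter (fun p : Fin (q+1) × Fin (q+1) => p.1 < p.2)),
      (fun p : Fin (q+1) × Fin (q+1) => (Fin.castSucc p.1, Fin.castSucc p.2)) x =
      (fun p : Fin (q+1) × Fin (q+1) => (Fin.castSucc p.1, Fin.castSucc p.2)) y → x = y := by
    intro x _ y _ h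
    have h1 := Fin.castSucc_injective _ (congrArg Prod.fst h)
    have h2 := Fin.castSucc_injective _ (congrArg Prod.snd h)
    exact Prod.ext h1 h2
  have hqq : (-1:ℂ)^q * (-1:ℂ)^q = 1 := neg_one_sq_pow q
  have key2 : ∀ u v : ℂ, (-1:ℂ)^q * (u * ((-1:ℂ)^q * v)) = u * v := by
    intro u v
    calc (-1:ℂ)^q * (u * ((-1:ℂ)^q * v)) = ((-1:ℂ)^q * (-1:ℂ)^q) * (u*v) := by ring
      _ = u * v := by rw [hqq, one_mul]
  have hPartB : ∑ p ∈ ((Finset.univ.filter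
          (fun p : Fin (q+2) × Fin (q+2) => p.1 < p.2)).filter
          (fun p => ¬ p.2 = Fin.last (q+1))),
        (-1 : ℂ) ^ (p.1.val + p.2.val) * bcoef ((Fin.snoc X 0 : Fin (q+2) → Fin 2) p.1) ((Fin.snoc X 0 : Fin (q+2) → Fin 2) p.2) *
          ((Fin.snoc l 0 : Fin (q+2) → ℂ) p.1 - (Fin.snoc l 0 : Fin (q+2) → ℂ) p.2) *
          γ (fun k => if k.val = 0 then bres ((Fin.snoc X 0 : Fin (q+2) → Fin 2) p.1) ((Fin.snoc X 0 : Fin (q+2) → Fin 2) p.2)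
                else removeTwo p.1 p.2 (Fin.snoc X 0) 0 (k.val - 1))
            (fun k => if k.val = 0 then (Fin.snoc l 0 : Fin (q+2) → ℂ) p.1 + (Fin.snoc l 0 : Fin (q+2) → ℂ) p.2
                else removeTwo p.1 p.2 (Fin.snoc l 0) 0 (k.val - 1))
      = (-1:ℂ)^q * (dW (tauW γ) X l) := by
    rw [hB, Finset.sum_image hBinj, hD, Finset.mul_sum]
    apply Finset.sum_congr rfl
    intro p hp
    have hij : (p.1 : ℕ) < (p.2 : ℕ) := by
      have := (Finset.mem_filter.mp hp).2
      exact this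
    simp only [Fin.snoc_castSucc, Fin.coe_castSucc]
    rw [args_mid X 0 (bres (X p.1) (X p.2)) p.1 p.2 hij,
      args_mid l 0 (l p.1 + l p.2) p.1 p.2 hij]
    exact (key2 _ _).symm
  rw [hPartA, hPartB]
  have h1 : (-1:ℂ)^(q+1) * (-1:ℂ)^(q+1) = 1 := neg_one_sq_pow (q+1)
  have h2 : (-1:ℂ)^(q+1) * (-1:ℂ)^q = -1 := by
    rw [pow_succ]
    calc (-1:ℂ)^q * (-1) * (-1:ℂ)^q = ((-1:ℂ)^q * (-1:ℂ)^q) * (-1) := by ring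
      _ = -1 := by rw [hqq, one_mul]
  linear_combination ((∑ i, l i) * γ X l) * h1 + (dW (tauW γ) X l) * h2

end Homotopy

/-- for `a ≠ 0`, the reduced cohomology of the W(2,2) Lie
conformal algebra `𝒲` with coefficients in `ℂ_a` vanishes in all degrees. -/
theorem stmt17 (a : ℂ) (ha : a ≠ 0) (q : ℕ) :
    Subsingleton (reducedHA a q) := by
  rw [Submodule.Quotient.subsingleton_iff, Submodule.comap_subtype_eq_top]
  intro γ hγ
  have hγ' : γ ∈ cochainSub q ⊓
      Submodule.comap (dWLin q) (Submodule.map (paA a (q+1)) (cochainSub (q+1))) := hγ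
  obtain ⟨hc, hd⟩ := Submodule.mem_inf.mp hγ'
  obtain ⟨η, hη, hηeq⟩ := Submodule.mem_comap.mp hd
  cases q with
  | zero =>
    show γ ∈ Submodule.map (paA a 0) (cochainSub 0)
    refine ⟨a⁻¹ • γ, Submodule.smul_mem _ _ hc, ?_⟩
    funext Y lv
    show (a + ∑ i, lv i) * ((a⁻¹ • γ) Y lv) = γ Y lv
    simp only [Pi.smul_apply, smul_eq_mul, Finset.univ_eq_empty, Finset.sum_empty, add_zero]
    field_simp
  | succ m =>
    show γ ∈ Submodule.map (dWLin m) (cochainSub m) ⊔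
      Submodule.map (paA a (m+1)) (cochainSub (m+1))
    have hγc : IsCochain γ := hc
    have hηc : IsCochain η := hη
    have htγ : IsCochain (tauW γ) := tauW_isCochain hγc
    have htη : IsCochain (tauW η) := tauW_isCochain hηc
    have htd : tauW (dW γ) = (paA a (m+1)) (tauW η) := by
      rw [show dW γ = dWLin (m+1) γ from rfl, ← hηeq, tauW_paA]
    have hdec : γ = (paA a (m+1)) (a⁻¹ • (γ - tauW η)) + ((-a⁻¹) • (dWLin m) (tauW γ)) := by
      funext Y lv
      have hk := homotopy γ hγc.2 Y lv
      rw [htd] at hk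
      simp only [paA, dWLin, LinearMap.coe_mk, AddHom.coe_mk, Pi.add_apply, Pi.smul_apply,
        smul_eq_mul, Pi.sub_apply] at hk ⊢
      field_simp
      linear_combination hk
    rw [hdec]
    refine Submodule.add_mem _ (Submodule.mem_sup_right ?_) (Submodule.mem_sup_left ?_)
    · exact ⟨a⁻¹ • (γ - tauW η),
        Submodule.smul_mem _ _ (Submodule.sub_mem _ hc htη), rfl⟩
    · exact Submodule.smul_mem _ _ (Submodule.mem_map_of_mem htγ)
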